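/- Let Δ_β ∈ ℝ^d, Δ_Θ ∈ ℝ^{N×T}, and suppose the cone condition ‖M_{Λ₀}Δ_Θ M_{Γ₀}‖_nuc ≤ c₀(√(NT)‖Δ_β‖ + ‖Δ_Θ − M_{Λ₀}Δ_Θ M_{Γ₀}‖_nuc) holds, where M_{Λ₀}, M_{Γ₀} are orthogonal projections with rank(I − M_{Λ₀}) ≤ R and rank(I − M_{Γ₀}) ≤ R. Then ‖Δ_Θ‖_nuc ≤ 2(1 + c₀)√(2R) · (√(NT)‖Δ_β‖ + ‖Δ_Θ‖_F). -/

import Mathlib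

/-!
Split `ΔΘ = MΛ ΔΘ MΓ + E`. The nuclear norm is subadditive, because it is the largest value of the
pairing `∑ j, ⟪u j, A v j⟫` over families `u`, `v` satisfying Bessel's inequality, attained at the
singular vectors of `A`. The remainder `E = (1 - MΛ) ΔΘ + MΛ ΔΘ (1 - MΓ)` has rank at most `2R`, and
it is Frobenius-orthogonal to `MΛ ΔΘ MΓ`, so `‖E‖_F ≤ ‖ΔΘ‖_F`; Cauchy–Schwarz over its nonzero
singular values gives `‖E‖_nuc ≤ √(2R) ‖ΔΘ‖_F`. The cone condition bounds `‖MΛ ΔΘ MΓ‖_nuc`.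
-/

open Matrix BigOperators MeasureTheory ProbabilityTheory

/-- The singular values of a real matrix `A`, defined as the square roots of the
eigenvalues of `Aᴴ * A` (not sorted). -/
noncomputable def singularValues {N T : ℕ} (A : Matrix (Fin N) (Fin T) ℝ) : Fin T → ℝ :=
  fun j => Real.sqrt ((Matrix.isHermitian_conjTranspose_mul_self A).eigenvalues j)

/-- The nuclear norm of a real matrix: the sum of its singular values. -/
noncomputable def nuclearNorm {N T : ℕ} (A : Matrix (Fin N) (Fin T) ℝ) : ℝ :=
  ∑ j, singularValues A j

/-- The Frobenius norm of a real matrix. -/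
noncomputable def frobNorm {N T : ℕ} (A : Matrix (Fin N) (Fin T) ℝ) : ℝ :=
  Real.sqrt (∑ i, ∑ j, (A i j)^2)

/-- The operator (spectral) norm of a real matrix: its largest singular value. -/
noncomputable def opNorm {N T : ℕ} (A : Matrix (Fin N) (Fin T) ℝ) : ℝ :=
  ⨆ j, singularValues A j

open Finset RealInnerProductSpace

section InnerProduct

variable {E F : Type*} [NormedAddCommGroup E] [InnerProductSpace ℝ E]
  [NormedAddCommGroup F] [InnerProductSpace ℝ F] {ι κ : Type*} [Fintype ι] [Fintype κ]

theorem sum_inner_sq_le_of_pairwise_inner_eq_zero {w : ι → F}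
    (horth : Pairwise fun i j ↦ ⟪w i, w j⟫ = 0) (hw : ∀ i, ‖w i‖ ≤ 1) (x : F) :
    ∑ i, ⟪w i, x⟫ ^ 2 ≤ ‖x‖ ^ 2 := by
  set s := ∑ i, ⟪w i, x⟫ ^ 2
  set S := ∑ i, ⟪w i, x⟫ • w i
  have hSx : ⟪S, x⟫ = s := by
    simp only [S, s, sum_inner, real_inner_smul_left, sq]
  have hSS : ‖S‖ ^ 2 ≤ s := by
    rw [← real_inner_self_eq_norm_sq]
    simp only [S, sum_inner, inner_sum, real_inner_smul_left, real_inner_smul_right]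
    refine sum_le_sum fun i _ ↦ ?_
    rw [sum_eq_single i (fun j _ hji ↦ by rw [horth hji]; ring) (by simp),
      real_inner_self_eq_norm_sq]
    have : ‖w i‖ ^ 2 ≤ 1 := pow_le_one₀ (norm_nonneg _) (hw i)
    nlinarith [sq_nonneg ⟪w i, x⟫]
  have hcs : s ^ 2 ≤ s * ‖x‖ ^ 2 := by
    calc s ^ 2 = ⟪S, x⟫ ^ 2 := by rw [hSx]
      _ ≤ ‖S‖ ^ 2 * ‖x‖ ^ 2 := by
        rw [← mul_pow]; exact sq_le_sq.2 ((abs_real_inner_le_norm S x).trans (le_abs_self _))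
      _ ≤ s * ‖x‖ ^ 2 := by gcongr
  have hs : 0 ≤ s := sum_nonneg fun i _ ↦ sq_nonneg _
  nlinarith

theorem sum_inner_apply_le_sum_norm_apply (T : E →ₗ[ℝ] F) (b : OrthonormalBasis κ ℝ E)
    {u : ι → F} {v : ι → E} (hu : ∀ y, ∑ j, ⟪u j, y⟫ ^ 2 ≤ ‖y‖ ^ 2)
    (hv : ∀ x, ∑ j, ⟪v j, x⟫ ^ 2 ≤ ‖x‖ ^ 2) :
    ∑ j, ⟪u j, T (v j)⟫ ≤ ∑ k, ‖T (b k)‖ := by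
  have hexpand : ∀ j, ⟪u j, T (v j)⟫ = ∑ k, ⟪v j, b k⟫ * ⟪u j, T (b k)⟫ := fun j ↦ by
    conv_lhs => rw [← b.sum_repr' (v j)]
    simp only [map_sum, map_smul, inner_sum, real_inner_smul_right, real_inner_comm (b _)]
  rw [sum_congr rfl fun j _ ↦ hexpand j, sum_comm]
  refine sum_le_sum fun k _ ↦ ?_
  calc ∑ j, ⟪v j, b k⟫ * ⟪u j, T (b k)⟫
      ≤ √(∑ j, ⟪v j, b k⟫ ^ 2) * √(∑ j, ⟪u j, T (b k)⟫ ^ 2) := Real.sum_mul_le_sqrt_mul_sqrt _ _ _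
    _ ≤ √(‖b k‖ ^ 2) * √(‖T (b k)‖ ^ 2) := by gcongr <;> apply_assumption
    _ = ‖T (b k)‖ := by simp [b.orthonormal.1 k]

end InnerProduct

theorem Finset.sq_sum_le_card_filter_ne_zero_mul_sum_sq {ι R : Type*} [Fintype ι] [CommRing R]
    [LinearOrder R] [IsStrictOrderedRing R] (f : ι → R) :
    (∑ i, f i) ^ 2 ≤ #{i | f i ≠ 0} * ∑ i, f i ^ 2 := by
  have hsq : ∑ i, f i ^ 2 = ∑ i ∈ {i | f i ≠ 0}, f i ^ 2 :=
    (sum_filter_of_ne fun i _ hi ↦ by simpa using hi).symm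
  rw [← sum_filter_ne_zero, hsq]
  exact sq_sum_le_card_mul_sum_sq

theorem Matrix.rank_add_le {m n K : Type*} [Fintype n] [Fintype m] [Field K]
    (A B : Matrix m n K) : (A + B).rank ≤ A.rank + B.rank := by
  have hrange : LinearMap.range (A + B).mulVecLin
      ≤ LinearMap.range A.mulVecLin ⊔ LinearMap.range B.mulVecLin := by
    rintro _ ⟨x, rfl⟩
    rw [mulVecLin_add]
    exact Submodule.add_mem_sup ⟨x, rfl⟩ ⟨x, rfl⟩
  exact (Submodule.finrank_mono hrange).trans (Submodule.finrank_add_le_finrank_add_finrank _ _)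

theorem Matrix.rank_sub_mul_mul_le {m n K : Type*} [Fintype n] [Fintype m] [DecidableEq m]
    [DecidableEq n] [Field K] (A : Matrix m n K) (P : Matrix m m K) (Q : Matrix n n K) :
    (A - P * A * Q).rank ≤ (1 - P).rank + (1 - Q).rank := by
  have hsplit : A - P * A * Q = (1 - P) * A + P * A * (1 - Q) := by
    simp only [Matrix.sub_mul, Matrix.mul_sub, Matrix.one_mul, Matrix.mul_one]
    abel
  rw [hsplit]
  exact (rank_add_le _ _).trans (add_le_add (rank_mul_le_left _ _) (rank_mul_le_right _ _))

theorem Matrix.trace_transpose_mul_mul_mul_sub_eq_zero {m n R : Type*} [Fintype m] [Fintype n]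
    [CommRing R] (A : Matrix m n R) {P : Matrix m m R} {Q : Matrix n n R}
    (hPs : Pᵀ = P) (hPi : P * P = P) (hQs : Qᵀ = Q) (hQi : Q * Q = Q) :
    ((P * A * Q)ᵀ * (A - P * A * Q)).trace = 0 := by
  have hPQ : (P * A * Q)ᵀ = Q * Aᵀ * P := by
    rw [transpose_mul, transpose_mul, hPs, hQs, Matrix.mul_assoc]
  rw [Matrix.mul_sub, trace_sub, sub_eq_zero]
  calc ((P * A * Q)ᵀ * A).trace = ((Q * Q) * Aᵀ * P * A).trace := by rw [hPQ, hQi]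
    _ = (Q * (Q * Aᵀ * P * A)).trace := by simp only [Matrix.mul_assoc]
    _ = (Q * Aᵀ * P * A * Q).trace := trace_mul_comm _ _
    _ = (Q * Aᵀ * (P * P) * A * Q).trace := by rw [hPi]
    _ = ((P * A * Q)ᵀ * (P * A * Q)).trace := by rw [hPQ]; simp only [Matrix.mul_assoc]

section RealMatrices

variable {N T : ℕ}

theorem frobNorm_nonneg (A : Matrix (Fin N) (Fin T) ℝ) : 0 ≤ frobNorm A := Real.sqrt_nonneg _

theorem sq_frobNorm (A : Matrix (Fin N) (Fin T) ℝ) : frobNorm A ^ 2 = (Aᵀ * A).trace := by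
  rw [frobNorm, Real.sq_sqrt (by positivity), sum_comm]
  simp only [trace, diag_apply, mul_apply, transpose_apply, sq]

theorem frobNorm_sub_mul_mul_le (A : Matrix (Fin N) (Fin T) ℝ)
    {P : Matrix (Fin N) (Fin N) ℝ} {Q : Matrix (Fin T) (Fin T) ℝ}
    (hPs : Pᵀ = P) (hPi : P * P = P) (hQs : Qᵀ = Q) (hQi : Q * Q = Q) :
    frobNorm (A - P * A * Q) ≤ frobNorm A := by
  set X := P * A * Q
  have hcross : (Xᵀ * (A - X)).trace = 0 :=
    trace_transpose_mul_mul_mul_sub_eq_zero A hPs hPi hQs hQi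
  have hcross' : ((A - X)ᵀ * X).trace = 0 := by
    rw [← trace_transpose, transpose_mul, transpose_transpose, hcross]
  have hpyth : frobNorm A ^ 2 = frobNorm X ^ 2 + frobNorm (A - X) ^ 2 := by
    rw [sq_frobNorm, sq_frobNorm, sq_frobNorm]
    conv_lhs => rw [← add_sub_cancel X A]
    rw [transpose_add, Matrix.add_mul, Matrix.mul_add, Matrix.mul_add, trace_add, trace_add,
      trace_add, hcross, hcross']
    ring
  rw [← sq_le_sq₀ (frobNorm_nonneg _) (frobNorm_nonneg _), hpyth]
  exact le_add_of_nonneg_left (sq_nonneg _)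

noncomputable abbrev rightSingularBasis (M : Matrix (Fin N) (Fin T) ℝ) :
    OrthonormalBasis (Fin T) ℝ (EuclideanSpace ℝ (Fin T)) :=
  (isHermitian_conjTranspose_mul_self M).eigenvectorBasis

theorem inner_toEuclideanLin_rightSingularBasis (M : Matrix (Fin N) (Fin T) ℝ) (i j : Fin T) :
    ⟪toEuclideanLin M (rightSingularBasis M i), toEuclideanLin M (rightSingularBasis M j)⟫
      = if i = j then (isHermitian_conjTranspose_mul_self M).eigenvalues j else 0 := by
  have heig : toEuclideanLin (Mᴴ * M) (rightSingularBasis M j)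
      = (isHermitian_conjTranspose_mul_self M).eigenvalues j • rightSingularBasis M j := by
    ext k
    simpa [rightSingularBasis, toLpLin_apply] using
      congrFun ((isHermitian_conjTranspose_mul_self M).mulVec_eigenvectorBasis j) k
  rw [← LinearMap.adjoint_inner_right, ← toEuclideanLin_conjTranspose_eq_adjoint,
    ← LinearMap.comp_apply, ← toLpLin_mul_same, heig, real_inner_smul_right,
    orthonormal_iff_ite.1 (rightSingularBasis M).orthonormal]
  split_ifs <;> simp

theorem norm_toEuclideanLin_rightSingularBasis (M : Matrix (Fin N) (Fin T) ℝ) (j : Fin T) :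
    ‖toEuclideanLin M (rightSingularBasis M j)‖ = singularValues M j := by
  rw [norm_eq_sqrt_real_inner, inner_toEuclideanLin_rightSingularBasis, if_pos rfl]
  rfl

theorem nuclearNorm_eq_sum_norm_toEuclideanLin (M : Matrix (Fin N) (Fin T) ℝ) :
    nuclearNorm M = ∑ j, ‖toEuclideanLin M (rightSingularBasis M j)‖ := by
  simp only [norm_toEuclideanLin_rightSingularBasis, nuclearNorm]

theorem nuclearNorm_add_le (A B : Matrix (Fin N) (Fin T) ℝ) :
    nuclearNorm (A + B) ≤ nuclearNorm A + nuclearNorm B := by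
  set r := rightSingularBasis (A + B)
  set w := fun j ↦ toEuclideanLin (A + B) (r j)
  set l := fun j ↦ ‖w j‖⁻¹ • w j
  have hl : ∀ y, ∑ j, ⟪l j, y⟫ ^ 2 ≤ ‖y‖ ^ 2 := by
    refine sum_inner_sq_le_of_pairwise_inner_eq_zero (fun i j hij ↦ ?_) (fun j ↦ ?_)
    · simp only [l, w, r, real_inner_smul_left, real_inner_smul_right,
        inner_toEuclideanLin_rightSingularBasis, if_neg hij, mul_zero]
    · rw [norm_smul, norm_inv, norm_norm]
      exact inv_mul_le_one_of_le₀ le_rfl (norm_nonneg _)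
  have hr : ∀ x, ∑ j, ⟪r j, x⟫ ^ 2 ≤ ‖x‖ ^ 2 := fun x ↦ by
    simpa using r.orthonormal.sum_inner_products_le x (s := univ)
  calc nuclearNorm (A + B) = ∑ j, ⟪l j, toEuclideanLin (A + B) (r j)⟫ := by
        rw [nuclearNorm_eq_sum_norm_toEuclideanLin]
        refine sum_congr rfl fun j _ ↦ ?_
        rw [real_inner_smul_left, real_inner_self_eq_norm_sq, sq, ← mul_assoc, inv_mul_mul_self]
    _ = ∑ j, ⟪l j, toEuclideanLin A (r j)⟫ + ∑ j, ⟪l j, toEuclideanLin B (r j)⟫ := by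
        simp only [map_add, LinearMap.add_apply, inner_add_right, sum_add_distrib]
    _ ≤ nuclearNorm A + nuclearNorm B := by
        rw [nuclearNorm_eq_sum_norm_toEuclideanLin A, nuclearNorm_eq_sum_norm_toEuclideanLin B]
        exact add_le_add (sum_inner_apply_le_sum_norm_apply _ _ hl hr)
          (sum_inner_apply_le_sum_norm_apply _ _ hl hr)

theorem sum_sq_singularValues (M : Matrix (Fin N) (Fin T) ℝ) :
    ∑ j, singularValues M j ^ 2 = frobNorm M ^ 2 := by
  have hM := isHermitian_conjTranspose_mul_self M
  simp only [singularValues, Real.sq_sqrt (eigenvalues_conjTranspose_mul_self_nonneg M _)]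
  rw [sq_frobNorm, ← conjTranspose_eq_transpose_of_trivial, hM.trace_eq_sum_eigenvalues]
  rfl

theorem card_singularValues_ne_zero (M : Matrix (Fin N) (Fin T) ℝ) :
    #{j | singularValues M j ≠ 0} = M.rank := by
  have hM := isHermitian_conjTranspose_mul_self M
  rw [← rank_conjTranspose_mul_self, hM.rank_eq_card_non_zero_eigs, Fintype.card_subtype]
  congr! 2 with j
  rw [singularValues, Real.sqrt_ne_zero (eigenvalues_conjTranspose_mul_self_nonneg M j)]

theorem nuclearNorm_le_sqrt_rank_mul_frobNorm (M : Matrix (Fin N) (Fin T) ℝ) :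
    nuclearNorm M ≤ √M.rank * frobNorm M := by
  have hsq := sq_sum_le_card_filter_ne_zero_mul_sum_sq (singularValues M)
  rw [card_singularValues_ne_zero, sum_sq_singularValues] at hsq
  calc nuclearNorm M ≤ √(M.rank * frobNorm M ^ 2) := Real.le_sqrt_of_sq_le hsq
    _ = √M.rank * frobNorm M := by
      rw [Real.sqrt_mul (Nat.cast_nonneg _), Real.sqrt_sq (frobNorm_nonneg M)]

end RealMatrices

/-- Under the cone condition, the nuclear norm of `Δ_Θ` is
controlled: `‖Δ_Θ‖_nuc ≤ 2(1+c₀)√(2R)(√(NT)‖Δ_β‖ + ‖Δ_Θ‖_F)`. -/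
theorem nuclearNorm_le_of_cone {N T d R : ℕ} (hR : 1 ≤ R) (c₀ : ℝ) (hc₀ : 0 < c₀)
    (Δβ : Fin d → ℝ) (ΔΘ : Matrix (Fin N) (Fin T) ℝ)
    (MΛ : Matrix (Fin N) (Fin N) ℝ) (MΓ : Matrix (Fin T) (Fin T) ℝ)
    (hΛs : MΛᵀ = MΛ) (hΛi : MΛ * MΛ = MΛ) (hΓs : MΓᵀ = MΓ) (hΓi : MΓ * MΓ = MΓ)
    (hΛr : (1 - MΛ).rank ≤ R) (hΓr : (1 - MΓ).rank ≤ R)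
    (hcone : nuclearNorm (MΛ * ΔΘ * MΓ)
        ≤ c₀ * (Real.sqrt ((N:ℝ)*T) * Real.sqrt (∑ k, (Δβ k)^2)
            + nuclearNorm (ΔΘ - MΛ * ΔΘ * MΓ))) :
    nuclearNorm ΔΘ ≤ 2 * (1 + c₀) * Real.sqrt (2*R)
        * (Real.sqrt ((N:ℝ)*T) * Real.sqrt (∑ k, (Δβ k)^2) + frobNorm ΔΘ) := by
  set a := Real.sqrt ((N:ℝ)*T) * Real.sqrt (∑ k, (Δβ k)^2)
  set E := ΔΘ - MΛ * ΔΘ * MΓ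
  have hsplit : nuclearNorm ΔΘ ≤ nuclearNorm (MΛ * ΔΘ * MΓ) + nuclearNorm E := by
    simpa [E] using nuclearNorm_add_le (MΛ * ΔΘ * MΓ) E
  have hrank : (E.rank : ℝ) ≤ 2 * R := by
    have : E.rank ≤ (1 - MΛ).rank + (1 - MΓ).rank := rank_sub_mul_mul_le ΔΘ MΛ MΓ
    norm_cast; omega
  have hE : nuclearNorm E ≤ √(2 * R) * frobNorm ΔΘ :=
    (nuclearNorm_le_sqrt_rank_mul_frobNorm E).trans <| mul_le_mul (Real.sqrt_le_sqrt hrank)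
      (frobNorm_sub_mul_mul_le ΔΘ hΛs hΛi hΓs hΓi) (frobNorm_nonneg _) (Real.sqrt_nonneg _)
  have hsqrt : 1 ≤ √(2 * R) := Real.one_le_sqrt.2 (by norm_cast; omega)
  have ha : 0 ≤ a := by positivity
  calc nuclearNorm ΔΘ ≤ c₀ * a + (1 + c₀) * nuclearNorm E := by linarith
    _ ≤ c₀ * a + (1 + c₀) * (√(2 * R) * frobNorm ΔΘ) := by gcongr
    _ ≤ 2 * (1 + c₀) * √(2 * R) * (a + frobNorm ΔΘ) := by
      have hs1 : 0 ≤ √(2 * R) - 1 := sub_nonneg.2 hsqrt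
      nlinarith [mul_nonneg hs1 ha, mul_nonneg hc₀.le ha, mul_nonneg (mul_nonneg hc₀.le hs1) ha,
        mul_nonneg (by positivity : 0 ≤ (1 + c₀) * √(2 * R)) (frobNorm_nonneg ΔΘ)]
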